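/- arXiv:2205.11334 — 3 statements merged into one kernel-verified Lean document; each statement's English description precedes it below -/
import Mathlib

section
/- Let Λ be a full lattice in M₂(ℝ) and let τ = x + iy be a complex number with y > 0. Then the image L_τ = {β·(τ,1)ᵗ : β ∈ Λ} is a full lattice in ℂ², and its covolume with respect to Lebesgue measure on ℂ² ≅ ℝ⁴ satisfies vol(ℂ²/L_τ) = y² · vol(M₂(ℝ)/Λ). -/
open MeasureTheory

noncomputable instance : MeasureSpace (Matrix (Fin 2) (Fin 2) ℝ) :=
  inferInstanceAs (MeasureSpace (Fin 2 → Fin 2 → ℝ))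

noncomputable instance : NormedAddCommGroup (Matrix (Fin 2) (Fin 2) ℝ) :=
  inferInstanceAs (NormedAddCommGroup (Fin 2 → Fin 2 → ℝ))

noncomputable instance : NormedSpace ℝ (Matrix (Fin 2) (Fin 2) ℝ) :=
  inferInstanceAs (NormedSpace ℝ (Fin 2 → Fin 2 → ℝ))

/-!
The map `β ↦ β·(τ,1)ᵗ` factors as the measure-preserving identification of `M₂(ℝ)` with
`ℂ²` sending each row `(a, b)` to `a + bi`, followed by the `ℝ`-linear automorphism of `ℂ²`
acting on each coordinate by `a + bi ↦ aτ + b`, whose determinant is `(-y)² = y²`. A linear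
automorphism carries full lattices to full lattices and multiplies covolumes by the absolute
value of its determinant.
-/

open Module

namespace ZLattice

theorem coe_comap_symm {K : Type*} [NormedField K] {E F : Type*} [NormedAddCommGroup E]
    [NormedSpace K E] [NormedAddCommGroup F] [NormedSpace K F] (L : Submodule ℤ E)
    (e : E ≃L[K] F) :
    (ZLattice.comap K L e.symm.toLinearMap : Set F) = e '' L := by
  rw [coe_comap, e.image_eq_preimage_symm]
  rfl

variable {E : Type*} [NormedAddCommGroup E] [NormedSpace ℝ E] [FiniteDimensional ℝ E]
  [MeasurableSpace E] [BorelSpace E] (L : Submodule ℤ E) [DiscreteTopology L] [IsZLattice ℝ L]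
  (μ : Measure E) [μ.IsAddHaarMeasure]

theorem covolume_comap_symm (f : E ≃L[ℝ] E) :
    covolume (ZLattice.comap ℝ L f.symm.toLinearMap) μ =
      |LinearMap.det (f : E →ₗ[ℝ] E)| * covolume L μ := by
  let b := Free.chooseBasis ℤ L
  have hdomain : ZSpan.fundamentalDomain
      ((b.ofZLatticeComap ℝ L f.symm.toLinearEquiv).ofZLatticeBasis ℝ _) =
        f '' ZSpan.fundamentalDomain (b.ofZLatticeBasis ℝ L) := by
    rw [Basis.ofZLatticeBasis_comap, ← f.coe_toLinearEquiv, ZSpan.map_fundamentalDomain]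
    rfl
  rw [covolume_eq_measure_fundamentalDomain _ μ
      (isAddFundamentalDomain (b.ofZLatticeComap ℝ L f.symm.toLinearEquiv) μ),
    covolume_eq_measure_fundamentalDomain L μ (isAddFundamentalDomain b μ), hdomain,
    measureReal_def, measureReal_def, μ.addHaar_image_continuousLinearEquiv, ENNReal.toReal_mul,
    ENNReal.toReal_ofReal (abs_nonneg _)]

end ZLattice

namespace Complex

noncomputable def reMulAddIm (w : ℂ) : ℂ →ₗ[ℝ] ℂ where
  toFun z := z.re * w + z.im
  map_add' z z' := by simp only [add_re, add_im, ofReal_add]; ring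
  map_smul' r z := by
    simp only [real_smul, re_ofReal_mul, im_ofReal_mul, ofReal_mul, RingHom.id_apply]; ring

theorem det_reMulAddIm (w : ℂ) : LinearMap.det (reMulAddIm w) = -w.im := by
  rw [← LinearMap.det_toMatrix basisOneI,
    show LinearMap.toMatrix basisOneI basisOneI (reMulAddIm w) = !![w.re, 1; w.im, 0] by
      ext i j
      fin_cases i <;> fin_cases j <;> simp [LinearMap.toMatrix_apply, reMulAddIm],
    Matrix.det_fin_two_of]
  ring

variable (ι : Type*) [Fintype ι]

noncomputable def piReMulAddIm {w : ℂ} (hw : w.im ≠ 0) : (ι → ℂ) ≃L[ℝ] (ι → ℂ) :=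
  (LinearMap.equivOfDetNeZero (LinearMap.pi fun i ↦ reMulAddIm w ∘ₗ LinearMap.proj i)
    (by simp [LinearMap.det_pi, det_reMulAddIm, hw])).toContinuousLinearEquiv

theorem piReMulAddIm_apply {w : ℂ} (hw : w.im ≠ 0) (z : ι → ℂ) (i : ι) :
    piReMulAddIm ι hw z i = (z i).re * w + (z i).im := rfl

theorem det_piReMulAddIm {w : ℂ} (hw : w.im ≠ 0) :
    LinearMap.det (piReMulAddIm ι hw : (ι → ℂ) →ₗ[ℝ] (ι → ℂ)) =
      (-w.im) ^ Fintype.card ι := by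
  rw [← det_reMulAddIm, ← Finset.card_univ, ← Finset.prod_const, ← LinearMap.det_pi]
  rfl

end Complex

instance : BorelSpace (Matrix (Fin 2) (Fin 2) ℝ) :=
  inferInstanceAs (BorelSpace (Fin 2 → Fin 2 → ℝ))

instance : (volume : Measure (Matrix (Fin 2) (Fin 2) ℝ)).IsAddHaarMeasure :=
  haveI := isAddHaarMeasure_volume_pi (Fin 2)
  inferInstanceAs (volume : Measure (Fin 2 → Fin 2 → ℝ)).IsAddHaarMeasure

noncomputable def matrixRowsToComplex : Matrix (Fin 2) (Fin 2) ℝ ≃L[ℝ] (Fin 2 → ℂ) :=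
  (LinearEquiv.piCongrRight fun _ ↦ Complex.basisOneI.equivFun.symm).toContinuousLinearEquiv

theorem matrixRowsToComplex_apply (β : Matrix (Fin 2) (Fin 2) ℝ) (i : Fin 2) :
    matrixRowsToComplex β i = β i 0 + β i 1 * Complex.I := by
  change Complex.basisOneI.equivFun.symm (β i) = _
  simp [Module.Basis.equivFun_symm_apply, Fin.sum_univ_two]

theorem measurePreserving_matrixRowsToComplex_symm :
    MeasurePreserving matrixRowsToComplex.symm :=
  volume_preserving_pi fun _ ↦ Complex.volume_preserving_equiv_pi

theorem piReMulAddIm_matrixRowsToComplex {τ : ℂ} (hτ : τ.im ≠ 0)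
    (β : Matrix (Fin 2) (Fin 2) ℝ) :
    Complex.piReMulAddIm (Fin 2) hτ (matrixRowsToComplex β) =
      (β.map Complex.ofReal).mulVec ![τ, 1] := by
  ext i
  simp [Complex.piReMulAddIm_apply, matrixRowsToComplex_apply, Matrix.mulVec, dotProduct,
    Fin.sum_univ_two]

/-- Let `Λ` be a full lattice in `M₂(ℝ)` and `τ = x + iy` with `y > 0`. Then
`L_τ = {β·(τ,1)ᵗ : β ∈ Λ}` is a full lattice in `ℂ²`, and its covolume with respect to
Lebesgue measure on `ℂ² ≅ ℝ⁴` satisfies `vol(ℂ²/L_τ) = y² · vol(M₂(ℝ)/Λ)`. -/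
theorem stmt1 (Λ : Submodule ℤ (Matrix (Fin 2) (Fin 2) ℝ))
    [DiscreteTopology Λ] [IsZLattice ℝ Λ] (τ : ℂ) (hτ : 0 < τ.im) :
    ∃ (L : Submodule ℤ (Fin 2 → ℂ)) (_ : DiscreteTopology L) (_ : IsZLattice ℝ L),
      (L : Set (Fin 2 → ℂ))
        = (fun β : Matrix (Fin 2) (Fin 2) ℝ => (β.map (Complex.ofReal)).mulVec ![τ, 1]) '' Λ ∧
      ZLattice.covolume L = τ.im ^ 2 * ZLattice.covolume Λ := by
  let G := Complex.piReMulAddIm (Fin 2) hτ.ne'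
  refine ⟨ZLattice.comap ℝ (ZLattice.comap ℝ Λ matrixRowsToComplex.symm.toLinearMap)
    G.symm.toLinearMap, inferInstance, inferInstance, ?_, ?_⟩
  · rw [ZLattice.coe_comap_symm, ZLattice.coe_comap_symm, Set.image_image]
    simp_rw [G, piReMulAddIm_matrixRowsToComplex]
  · rw [ZLattice.covolume_comap_symm, Complex.det_piReMulAddIm,
      ZLattice.covolume_comap _ _ _ measurePreserving_matrixRowsToComplex_symm, Fintype.card_fin,
      abs_pow, abs_neg, sq_abs]
end

section
/- Let R be a commutative ring and p ∈ R. With T, T', E₁, E₂, J, J', N the standard data below, the R-module N consists exactly of the maps f_c : T' → T, f_c(u,v) = (c·u, p·c·v) for c ∈ R; in particular N is a free R-module of rank 1 generated by f₁ : (u,v) ↦ (u, p·v). -/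
/-! Commuting with the idempotents `E₁, E₂` makes `f` diagonal, `f (u, v) = (a * u, d * v)`.
Evaluating `f ∘ J' = J ∘ f` at `(1, 0)` gives `d = p * a`, and `a` is recovered from `f` as the
first coordinate of `f (1, 0)`, whence uniqueness. -/

section

variable (R : Type*) [CommRing R] (p : R)

/-- The endomorphism `E₁(u,v) = (u,0)` of the standard module `R²`. -/
def E₁ : R × R →ₗ[R] R × R := (LinearMap.inl R R R).comp (LinearMap.fst R R R)

/-- The endomorphism `E₂(u,v) = (0,v)` of the standard module `R²`. -/
def E₂ : R × R →ₗ[R] R × R := (LinearMap.inr R R R).comp (LinearMap.snd R R R)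

/-- The endomorphism `J(u,v) = (v, p·u)` of the standard module `T`. -/
def J : R × R →ₗ[R] R × R :=
  (LinearMap.inl R R R).comp (LinearMap.snd R R R)
    + (LinearMap.inr R R R).comp (p • LinearMap.fst R R R)

/-- The endomorphism `J'(u,v) = (p·v, u)` of the twisted standard module `T'`. -/
def J' : R × R →ₗ[R] R × R :=
  (LinearMap.inl R R R).comp (p • LinearMap.snd R R R)
    + (LinearMap.inr R R R).comp (LinearMap.fst R R R)

end

section

variable {R : Type*} [CommRing R]

@[simp] lemma E₁_apply (x : R × R) : E₁ R x = (x.1, 0) := rfl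

@[simp] lemma E₂_apply (x : R × R) : E₂ R x = (0, x.2) := rfl

@[simp] lemma J_apply (p : R) (x : R × R) : J R p x = (x.2, p * x.1) := by
  simp [J]

@[simp] lemma J'_apply (p : R) (x : R × R) : J' R p x = (p * x.2, x.1) := by
  simp [J']

lemma apply_eq_of_comp_E₁_of_comp_E₂ {f : R × R →ₗ[R] R × R}
    (h₁ : f ∘ₗ E₁ R = E₁ R ∘ₗ f) (h₂ : f ∘ₗ E₂ R = E₂ R ∘ₗ f) (u v : R) :
    f (u, v) = ((f (1, 0)).1 * u, (f (0, 1)).2 * v) := by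
  have e₁ : f (1, 0) = ((f (1, 0)).1, 0) := by simpa using LinearMap.congr_fun h₁ (1, 0)
  have e₂ : f (0, 1) = (0, (f (0, 1)).2) := by simpa using LinearMap.congr_fun h₂ (0, 1)
  calc f (u, v) = u • f (1, 0) + v • f (0, 1) := by
        rw [← map_smul, ← map_smul, ← map_add]; simp
    _ = ((f (1, 0)).1 * u, (f (0, 1)).2 * v) := by
        rw [e₁, e₂]; simp [mul_comm]

lemma snd_apply_eq_of_comp_J' {p : R} {f : R × R →ₗ[R] R × R}
    (h₂ : f ∘ₗ E₂ R = E₂ R ∘ₗ f) (h : f ∘ₗ J' R p = J R p ∘ₗ f) :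
    (f (0, 1)).2 = p * (f (1, 0)).1 := by
  have hsnd := congrArg Prod.snd (LinearMap.congr_fun h₂ (1, 0))
  simp only [LinearMap.comp_apply, E₂_apply, Prod.mk_zero_zero, map_zero] at hsnd
  -- `J'` sends `(1, 0)` to `(0, 1)`, while `J` sends `f (1, 0) = (a, 0)` to `(0, p * a)`.
  simpa [← hsnd] using congrArg Prod.snd (LinearMap.congr_fun h (1, 0))

lemma comp_E₁_comp_E₂_comp_J'_of_apply_eq {p c : R} {f : R × R →ₗ[R] R × R}
    (hf : ∀ u v, f (u, v) = (c * u, p * (c * v))) :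
    f ∘ₗ E₁ R = E₁ R ∘ₗ f ∧ f ∘ₗ E₂ R = E₂ R ∘ₗ f ∧ f ∘ₗ J' R p = J R p ∘ₗ f := by
  refine ⟨?_, ?_, ?_⟩ <;> ext <;> simp [hf, mul_comm]

end

/-- With `T, T', E₁, E₂, J, J'` the standard data, the module `N` of `R`-linear maps
`f : T' → T` commuting with `E₁, E₂` and intertwining `J'` with `J` consists exactly of the
maps `f_c(u,v) = (c·u, p·c·v)` for `c ∈ R`; in particular `N` is a free `R`-module of rank 1
generated by `f₁ : (u,v) ↦ (u, p·v)` (the case `c = 1`, with unique coefficient `c`). -/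
theorem stmt14 {R : Type*} [CommRing R] (p : R) (f : R × R →ₗ[R] R × R) :
    (f ∘ₗ E₁ R = E₁ R ∘ₗ f ∧ f ∘ₗ E₂ R = E₂ R ∘ₗ f ∧ f ∘ₗ J' R p = J R p ∘ₗ f)
      ↔ ∃! c : R, ∀ u v : R, f (u, v) = (c * u, p * (c * v)) := by
  refine ⟨fun ⟨h₁, h₂, h⟩ => ⟨(f (1, 0)).1, fun u v => ?_, fun c hc => ?_⟩,
    fun ⟨_, hc, _⟩ => comp_E₁_comp_E₂_comp_J'_of_apply_eq hc⟩
  · rw [apply_eq_of_comp_E₁_of_comp_E₂ h₁ h₂, snd_apply_eq_of_comp_J' h₂ h, mul_assoc]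
  · simpa using congrArg Prod.fst (hc 1 0).symm
end

section
/- Let R be a commutative ring and p ∈ R a nonzerodivisor. With T, T', E₁, E₂, J, J', N the standard data below, the R-submodule of the exterior square Λ²_R T generated by the elements f(u) ∧ g(v), for f, g ∈ N and u, v ∈ T', is exactly p·Λ²_R T; concretely, for the generator f₁ of N one has f₁(e₁) ∧ f₁(e₂) = p·(e₁ ∧ e₂), where e₁ = (1,0), e₂ = (0,1). -/
open scoped Pointwise

section

variable (R : Type*) [CommRing R] (p : R)

/-- Membership in `N`: an `R`-linear map `f : T' → T` commuting with `E₁, E₂` and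
intertwining `J'` with `J`. -/
def memN (f : R × R →ₗ[R] R × R) : Prop :=
  f ∘ₗ E₁ R = E₁ R ∘ₗ f ∧ f ∘ₗ E₂ R = E₂ R ∘ₗ f ∧ f ∘ₗ J' R p = J R p ∘ₗ f

end

lemma wedge_eq {R : Type*} [CommRing R] (x y : R × R) :
    ExteriorAlgebra.ι R x * ExteriorAlgebra.ι R y
      = (x.1 * y.2 - x.2 * y.1) •
        (ExteriorAlgebra.ι R ((1:R),(0:R)) * ExteriorAlgebra.ι R ((0:R),(1:R))) := by
  have hx : x = x.1 • ((1:R),(0:R)) + x.2 • ((0:R),(1:R)) := by ext <;> simp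
  have hy : y = y.1 • ((1:R),(0:R)) + y.2 • ((0:R),(1:R)) := by ext <;> simp
  set a := ExteriorAlgebra.ι R ((1:R),(0:R)) with ha
  set b := ExteriorAlgebra.ι R ((0:R),(1:R)) with hb
  have haa : a * a = 0 := ExteriorAlgebra.ι_sq_zero _
  have hbb : b * b = 0 := ExteriorAlgebra.ι_sq_zero _
  have hba : b * a = - (a * b) := by
    have := ExteriorAlgebra.ι_add_mul_swap (R := R) ((1:R),(0:R)) ((0:R),(1:R))
    rw [← ha, ← hb] at this
    exact eq_neg_of_add_eq_zero_right this
  rw [hx, hy, map_add, map_add, map_smul, map_smul, map_smul, map_smul, ← ha, ← hb]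
  rw [add_mul, mul_add, mul_add]
  rw [smul_mul_smul_comm, smul_mul_smul_comm, smul_mul_smul_comm, smul_mul_smul_comm,
    haa, hbb, hba]
  simp only [smul_zero, smul_neg, zero_add, add_zero, Prod.fst_add, Prod.snd_add,
    Prod.smul_fst, Prod.smul_snd, smul_eq_mul, mul_one, mul_zero, add_zero, zero_add]
  module

lemma memN_apply {R : Type*} [CommRing R] {p : R} {f : R × R →ₗ[R] R × R}
    (hf : memN R p f) (u : R × R) :
    f u = ((f (1,0)).1 * u.1, p * (f (1,0)).1 * u.2) := by
  obtain ⟨h1, h2, h3⟩ := hf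
  have e1 : f (1,0) = ((f (1,0)).1, 0) := by
    have := LinearMap.congr_fun h1 ((1:R),(0:R))
    simpa [E₁] using this
  have e2 : f (0,1) = (0, (f (0,1)).2) := by
    have := LinearMap.congr_fun h2 ((0:R),(1:R))
    simpa [E₂] using this
  have e3 : (f (0,1)).2 = p * (f (1,0)).1 := by
    have := LinearMap.congr_fun h3 ((0:R),(1:R))
    simp [J, J', Prod.ext_iff] at this
    have hps : f (p, 0) = p • f (1, 0) := by
      rw [← map_smul]; congr 1; ext <;> simp
    rw [← this.1, hps, Prod.smul_fst, smul_eq_mul]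
  have hu : u = u.1 • ((1:R),(0:R)) + u.2 • ((0:R),(1:R)) := by ext <;> simp
  rw [hu, map_add, map_smul, map_smul, e1, e2, e3]
  ext <;> simp [mul_comm]

/-- Let `p` be a nonzerodivisor. The `R`-submodule of the exterior square `Λ²_R T` generated
by the elements `f(u) ∧ g(v)` for `f, g ∈ N` and `u, v ∈ T'` is exactly `p·Λ²_R T`;
concretely, for the generator `f₁` of `N` one has `f₁(e₁) ∧ f₁(e₂) = p·(e₁ ∧ e₂)`. -/
theorem stmt15 {R : Type*} [CommRing R] (p : R) (hp : p ∈ nonZeroDivisors R) :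
    Submodule.span R
        {x : ExteriorAlgebra R (R × R) |
          ∃ (f g : R × R →ₗ[R] R × R) (u v : R × R), memN R p f ∧ memN R p g ∧
            x = ExteriorAlgebra.ι R (f u) * ExteriorAlgebra.ι R (g v)}
      = p • (ExteriorAlgebra.exteriorPower R 2 (R × R)) ∧
    ExteriorAlgebra.ι R ((1 : R), (0 : R)) * ExteriorAlgebra.ι R ((0 : R), p)
      = p • (ExteriorAlgebra.ι R ((1 : R), (0 : R)) * ExteriorAlgebra.ι R ((0 : R), (1 : R))) := by
  set a := ExteriorAlgebra.ι R ((1:R),(0:R)) with ha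
  set b := ExteriorAlgebra.ι R ((0:R),(1:R)) with hb
  have key2 : ExteriorAlgebra.ι R ((1:R),(0:R)) * ExteriorAlgebra.ι R ((0:R), p)
      = p • (a * b) := by
    rw [show ((0:R), p) = p • ((0:R),(1:R)) by ext <;> simp, map_smul, mul_smul_comm, ← ha, ← hb]
  refine ⟨?_, key2⟩
  set f₁ : R × R →ₗ[R] R × R := LinearMap.prodMap LinearMap.id (p • LinearMap.id) with hf₁
  have hmem : memN R p f₁ := by
    refine ⟨?_, ?_, ?_⟩ <;>
      · apply LinearMap.ext; rintro ⟨u, v⟩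
        simp [hf₁, E₁, E₂, J, J', mul_comm]
  have hf₁e₁ : f₁ ((1:R),(0:R)) = ((1:R),(0:R)) := by simp [hf₁]
  have hf₁e₂ : f₁ ((0:R),(1:R)) = ((0:R), p) := by simp [hf₁]
  have hgen : p • (a * b) ∈ Submodule.span R
      {x : ExteriorAlgebra R (R × R) |
        ∃ (f g : R × R →ₗ[R] R × R) (u v : R × R), memN R p f ∧ memN R p g ∧
          x = ExteriorAlgebra.ι R (f u) * ExteriorAlgebra.ι R (g v)} := by
    apply Submodule.subset_span
    exact ⟨f₁, f₁, (1,0), (0,1), hmem, hmem, by rw [hf₁e₁, hf₁e₂, key2]⟩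
  apply le_antisymm
  · rw [Submodule.span_le]
    rintro x ⟨f, g, u, v, hf, hg, rfl⟩
    rw [memN_apply hf u, memN_apply hg v, wedge_eq, ← ha, ← hb]
    have : ((f (1,0)).1 * u.1 * (p * (g (1,0)).1 * v.2)
        - p * (f (1,0)).1 * u.2 * ((g (1,0)).1 * v.1))
        = p * ((f (1,0)).1 * (g (1,0)).1 * (u.1 * v.2 - u.2 * v.1)) := by ring
    rw [this, mul_smul]
    apply Submodule.smul_mem_pointwise_smul
    apply Submodule.smul_mem
    have h2 : a * b ∈ LinearMap.range (ExteriorAlgebra.ι R (M := R × R))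
        * LinearMap.range (ExteriorAlgebra.ι R (M := R × R)) :=
      Submodule.mul_mem_mul ⟨_, rfl⟩ ⟨_, rfl⟩
    rw [← pow_two] at h2
    exact h2
  · intro x hx
    have hx' : x ∈ p • ((ExteriorAlgebra.exteriorPower R 2 (R × R) : Submodule R _) : Set _) := by
      rw [← Submodule.coe_pointwise_smul]; exact hx
    obtain ⟨y, hy, rfl⟩ := Set.mem_smul_set.mp hx'
    have hy2 : y ∈ LinearMap.range (ExteriorAlgebra.ι R (M := R × R))
        * LinearMap.range (ExteriorAlgebra.ι R (M := R × R)) := by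
      rw [← pow_two]; exact hy
    refine Submodule.mul_induction_on hy2 ?_ ?_
    · rintro _ ⟨x', rfl⟩ _ ⟨y', rfl⟩
      rw [wedge_eq, ← ha, ← hb, smul_comm]
      exact Submodule.smul_mem _ _ hgen
    · intro m n hm hn
      rw [smul_add]
      exact add_mem hm hn
end
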